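/- arXiv:2108.04975 — 4 statements merged into one kernel-verified Lean document; each statement's English description precedes it below -/
import Mathlib

section
/- Under the cyclic face model with the perfect-orientation hypotheses, the number of switches equals l minus twice the number of black-to-white edges; that is, the cardinality of {i : ZMod l | o (i-1) ≠ o i} equals l - 2 * (cardinality of {i : ZMod l | edge i is black-to-white}). -/
/-!
Since `l` is even, colours alternate all the way around the cycle, so at a vertex `i` the
orientation switches exactly when the edges `i - 1` and `i` are both black-to-white or both not.
The perfect-orientation hypotheses say precisely that two consecutive edges are never both
black-to-white. Hence every vertex `i` is exactly one of: a switch, the start `i` of a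
black-to-white edge `i`, or the end `i` of a black-to-white edge `i - 1`; the last two kinds are
equinumerous.
-/

open Finset

theorem ZMod.even_val_sub_one_iff {l : ℕ} [NeZero l] (hl : Even l) (i : ZMod l) :
    Even (i - 1).val ↔ ¬Even i.val := by
  let φ := ZMod.castHom (even_iff_two_dvd.mp hl) (ZMod 2)
  have hφ : ∀ j : ZMod l, Even j.val ↔ φ j = 0 := fun j => by
    rw [← ZMod.natCast_eq_zero_iff_even, ZMod.natCast_val]; rfl
  rw [hφ, hφ, map_sub, map_one]
  generalize φ i = x
  revert x
  decide

theorem Finset.card_filter_not_and_not_comp_perm {α : Type*} [Fintype α] (σ : Equiv.Perm α)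
    (p : α → Prop) [DecidablePred p] (h : ∀ a, ¬(p a ∧ p (σ a))) :
    #{a | ¬p a ∧ ¬p (σ a)} = Fintype.card α - 2 * #{a | p a} := by
  classical
  have hσ : #{a | p (σ a)} = #{a | p a} := card_equiv σ (by simp)
  have hdisj : Disjoint (α := Finset α) {a | p a} {a | p (σ a)} :=
    disjoint_filter.mpr fun a _ hp hpσ => h a ⟨hp, hpσ⟩
  have hsplit := card_filter_add_card_filter_not (s := univ) (fun a => p a ∨ p (σ a))
  rw [filter_or, card_union_of_disjoint hdisj, hσ, card_univ] at hsplit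
  simp only [not_or] at hsplit
  omega

theorem switches_eq_length_sub_two_mul_bw
    (l : ℕ) [NeZero l] (hl : Even l)
    (o : ZMod l → Bool)
    (hblack : ∀ i : ZMod l, Even i.val → ¬(o (i - 1) = false ∧ o i = true))
    (hwhite : ∀ i : ZMod l, ¬Even i.val → ¬(o (i - 1) = true ∧ o i = false)) :
    (Finset.univ.filter (fun i : ZMod l => o (i - 1) ≠ o i)).card =
      l - 2 * (Finset.univ.filter (fun i : ZMod l =>
        (Even i.val ∧ o i = true) ∨ (¬Even i.val ∧ o i = false))).card := by
  set bw : ZMod l → Prop := fun i => (Even i.val ∧ o i = true) ∨ (¬Even i.val ∧ o i = false)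
  have vertex_cases (i : ZMod l) :
      ¬(bw i ∧ bw (i - 1)) ∧ (o (i - 1) ≠ o i ↔ ¬bw i ∧ ¬bw (i - 1)) := by
    have hpar := ZMod.even_val_sub_one_iff hl i
    have hb := hblack i
    have hw := hwhite i
    clear hblack hwhite
    by_cases he : Even i.val <;> cases hprev : o (i - 1) <;> cases hcur : o i <;> simp_all [bw]
  have hcount :=
    card_filter_not_and_not_comp_perm (Equiv.subRight 1) bw fun i => (vertex_cases i).1
  rw [ZMod.card] at hcount
  rwa [filter_congr fun i _ => (vertex_cases i).2]
end

section
/- In the cyclic face model (with no further hypotheses on the orientation o), the following parity identity holds: (cardinality of {i : ZMod l | o i = true}) + (cardinality of {i : ZMod l | edge i is black-to-white}) ≡ l/2 (mod 2). Consequently, the number of edges i with o i = true is odd if and only if: the number of black-to-white edges is odd when l is divisible by 4, and the number of black-to-white edges is even when l ≡ 2 (mod 4). -/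
/-! Every edge from a black vertex directed forward is counted in both cardinalities, every edge
from a white vertex in exactly one of them, and every other edge in neither; so the sum is twice a
count plus the number of white vertices, which is `l / 2`. -/

open Finset

theorem ZMod.card_filter_val (l : ℕ) [NeZero l] (P : ℕ → Prop) [DecidablePred P] :
    #{i : ZMod l | P i.val} = #{n ∈ range l | P n} := by
  refine card_nbij ZMod.val (fun i hi => ?_) (fun i _ j _ h => ZMod.val_injective l h)
    (fun n hn => ?_)
  · simp_all [ZMod.val_lt]
  · simp only [coe_filter, mem_range, Set.mem_ofPred_eq] at hn
    exact ⟨n, by simpa [ZMod.val_cast_of_lt hn.1] using hn.2, ZMod.val_cast_of_lt hn.1⟩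

theorem ZMod.card_filter_not_even_val (l : ℕ) [NeZero l] :
    #{i : ZMod l | ¬Even i.val} = l / 2 := by
  rw [ZMod.card_filter_val l (¬Even ·), ← Nat.card_multiples l 2]
  simp only [← even_iff_two_dvd, Nat.even_add_one]

theorem card_filter_add_card_filter_agree {α : Type*} [Fintype α] (p q : α → Prop)
    [DecidablePred p] [DecidablePred q] :
    #{a | q a} + #{a | (p a ∧ q a) ∨ (¬p a ∧ ¬q a)} = 2 * #{a | p a ∧ q a} + #{a | ¬p a} := by
  simp only [card_filter, mul_sum, ← sum_add_distrib]
  refine sum_congr rfl fun a _ => ?_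
  by_cases p a <;> by_cases q a <;> simp [*]

theorem kasteleyn_orientation_parity
    (l : ℕ) [NeZero l] (hl : Even l)
    (o : ZMod l → Bool) :
    ((Finset.univ.filter (fun i : ZMod l => o i = true)).card +
        (Finset.univ.filter (fun i : ZMod l =>
          (Even i.val ∧ o i = true) ∨ (¬Even i.val ∧ o i = false))).card)
      ≡ l / 2 [MOD 2] ∧
    (Odd (Finset.univ.filter (fun i : ZMod l => o i = true)).card ↔
      ((4 ∣ l ∧ Odd (Finset.univ.filter (fun i : ZMod l =>
          (Even i.val ∧ o i = true) ∨ (¬Even i.val ∧ o i = false))).card) ∨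
       (l % 4 = 2 ∧ Even (Finset.univ.filter (fun i : ZMod l =>
          (Even i.val ∧ o i = true) ∨ (¬Even i.val ∧ o i = false))).card))) := by
  have hcount := card_filter_add_card_filter_agree (fun i : ZMod l => Even i.val)
    (fun i => o i = true)
  simp only [Bool.not_eq_true, ZMod.card_filter_not_even_val] at hcount
  have hl2 : l % 2 = 0 := Nat.even_iff.mp hl
  refine ⟨?_, ?_⟩
  · unfold Nat.ModEq
    omega
  · rw [Nat.odd_iff, Nat.odd_iff, Nat.even_iff, Nat.dvd_iff_mod_eq_zero]
    omega
end

section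
/- Under the cyclic face model with the perfect-orientation hypotheses, let ext : ZMod l → ℝ satisfy ∑ i, ext i = 2π. For each i : ZMod l define c i ∈ ℂ by: c i = Complex.exp ((ext i / 2) * Complex.I) if vertex i is not a switch, and c i = Complex.exp (-((π - ext i) / 2) * Complex.I) if vertex i is a switch. Let bw be the cardinality of {i : ZMod l | edge i is black-to-white}. Then (-1)^bw * ∏ i, c i = (-1)^(l/2 + 1). -/
/-!
Reading the boundary of the face vertex by vertex, the perfect-orientation conditions say that
at each vertex exactly one of three things happens: the incoming edge is black-to-white, the
outgoing edge is black-to-white, or the vertex is a switch. Counting over all `l` vertices gives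
`2 * bw + sw = l`. A switch contributes `exp (i ext / 2) * (-i)`, so the product of the
contributions is `exp (i π) * (-i) ^ sw`, and `(-1) ^ bw * (-i) ^ sw = (-i) ^ (2 bw + sw) = (-i) ^ l`.
-/

open scoped Real
open Finset

theorem ZMod.even_val_add_one_iff {l : ℕ} [NeZero l] (hl : Even l) (i : ZMod l) :
    Even (i + 1).val ↔ ¬Even i.val := by
  have hval : ∀ j : ZMod l, Even j.val ↔ ZMod.castHom hl.two_dvd (ZMod 2) j = 0 := fun j => by
    rw [ZMod.castHom_apply, ← ZMod.natCast_val, ZMod.natCast_eq_zero_iff, even_iff_two_dvd]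
  rw [hval, hval, map_add, map_one]
  generalize ZMod.castHom hl.two_dvd (ZMod 2) i = x
  revert x
  decide

theorem Complex.exp_neg_pi_sub_div_two_mul_I (x : ℂ) :
    Complex.exp (-((π - x) / 2 * Complex.I)) = Complex.exp (x / 2 * Complex.I) * -Complex.I := by
  rw [← Complex.exp_neg_pi_div_two_mul_I, ← Complex.exp_add]
  ring_nf

theorem Complex.prod_ite_exp_half_mul_I {ι : Type*} [Fintype ι] (s : ι → Prop) [DecidablePred s]
    (θ : ι → ℝ) (hθ : ∑ i, θ i = 2 * π) :
    ∏ i, (if s i then Complex.exp (-((π - θ i) / 2 * Complex.I))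
      else Complex.exp (θ i / 2 * Complex.I)) = -(-Complex.I) ^ #{i | s i} := by
  have hsum : ∑ i, (θ i : ℂ) / 2 * Complex.I = π * Complex.I := by
    rw [← sum_mul, ← sum_div, ← Complex.ofReal_sum, hθ]
    push_cast
    ring
  calc ∏ i, (if s i then Complex.exp (-((π - θ i) / 2 * Complex.I))
        else Complex.exp (θ i / 2 * Complex.I))
      = ∏ i, Complex.exp (θ i / 2 * Complex.I) * (if s i then -Complex.I else 1) :=
        prod_congr rfl fun i _ => by split_ifs <;> simp [Complex.exp_neg_pi_sub_div_two_mul_I]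
    _ = Complex.exp (π * Complex.I) * (-Complex.I) ^ #{i | s i} := by
        rw [prod_mul_distrib, ← Complex.exp_sum, hsum, prod_ite, prod_const_one, mul_one,
          prod_const]
    _ = -(-Complex.I) ^ #{i | s i} := by rw [Complex.exp_pi_mul_I, neg_one_mul]

theorem Complex.neg_one_pow_mul_neg_I_pow {b s n : ℕ} (h : 2 * b + s = 2 * n) :
    (-1 : ℂ) ^ b * (-Complex.I) ^ s = (-1) ^ n := by
  have hI : (-Complex.I) ^ 2 = -1 := by rw [neg_sq, Complex.I_sq]
  rw [← hI, ← pow_mul, ← pow_mul, ← pow_add, h]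

namespace CyclicFace

variable {l : ℕ} [NeZero l] (o : ZMod l → Bool)

def IsBlackToWhite (i : ZMod l) : Prop :=
  (Even i.val ∧ o i = true) ∨ (¬Even i.val ∧ o i = false)

def IsSwitch (i : ZMod l) : Prop :=
  o (i - 1) ≠ o i

instance : DecidablePred (IsBlackToWhite o) := fun i => by
  unfold IsBlackToWhite; infer_instance

instance : DecidablePred (IsSwitch o) := fun i => by
  unfold IsSwitch; infer_instance

variable {o} (hl : Even l)
  (hblack : ∀ i : ZMod l, Even i.val → ¬(o (i - 1) = false ∧ o i = true))
  (hwhite : ∀ i : ZMod l, ¬Even i.val → ¬(o (i - 1) = true ∧ o i = false))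
include hl hblack hwhite

theorem ite_isBlackToWhite_sub_one_add_ite_isBlackToWhite_add_ite_isSwitch (i : ZMod l) :
    ((if IsBlackToWhite o (i - 1) then 1 else 0) + (if IsBlackToWhite o i then 1 else 0) +
      (if IsSwitch o i then 1 else 0) : ℕ) = 1 := by
  have hparity := ZMod.even_val_add_one_iff hl (i - 1)
  rw [sub_add_cancel] at hparity
  have hb := hblack i
  have hw := hwhite i
  unfold IsBlackToWhite IsSwitch
  by_cases he : Even i.val <;> rcases Bool.eq_false_or_eq_true (o (i - 1)) with h₁ | h₁ <;>
    rcases Bool.eq_false_or_eq_true (o i) with h₂ | h₂ <;> simp_all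

theorem two_mul_card_isBlackToWhite_add_card_isSwitch :
    2 * #{i | IsBlackToWhite o i} + #{i | IsSwitch o i} = l := by
  have hsum := Finset.sum_congr rfl fun i (_ : i ∈ univ) =>
    ite_isBlackToWhite_sub_one_add_ite_isBlackToWhite_add_ite_isSwitch hl hblack hwhite i
  have hshift : ∑ i : ZMod l, (if IsBlackToWhite o (i - 1) then 1 else 0) =
      ∑ i : ZMod l, (if IsBlackToWhite o i then 1 else 0) :=
    Fintype.sum_equiv (Equiv.subRight 1) _ _ fun _ => rfl
  rw [sum_add_distrib, sum_add_distrib, hshift] at hsum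
  simp only [card_filter]
  simpa [ZMod.card, two_mul] using hsum

end CyclicFace

theorem turning_numbers_fractional_kasteleyn
    (l : ℕ) [NeZero l] (hl : Even l)
    (o : ZMod l → Bool)
    (hblack : ∀ i : ZMod l, Even i.val → ¬(o (i - 1) = false ∧ o i = true))
    (hwhite : ∀ i : ZMod l, ¬Even i.val → ¬(o (i - 1) = true ∧ o i = false))
    (ext : ZMod l → ℝ) (hext : ∑ i : ZMod l, ext i = 2 * π)
    (c : ZMod l → ℂ)
    (hc : ∀ i : ZMod l, c i =
      if o (i - 1) ≠ o i then
        Complex.exp (-((((π : ℂ) - (ext i : ℂ)) / 2) * Complex.I))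
      else
        Complex.exp (((ext i : ℂ) / 2) * Complex.I)) :
    (-1 : ℂ) ^ (Finset.univ.filter (fun i : ZMod l =>
        (Even i.val ∧ o i = true) ∨ (¬Even i.val ∧ o i = false))).card *
      ∏ i : ZMod l, c i = (-1 : ℂ) ^ (l / 2 + 1) := by
  have hcount := CyclicFace.two_mul_card_isBlackToWhite_add_card_isSwitch hl hblack hwhite
  have hhalf : l = 2 * (l / 2) := (Nat.two_mul_div_two_of_even hl).symm
  have hprod : ∏ i, c i = -(-Complex.I) ^ #{i | CyclicFace.IsSwitch o i} := by
    rw [Fintype.prod_congr _ _ hc]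
    exact Complex.prod_ite_exp_half_mul_I _ ext hext
  change (-1 : ℂ) ^ #{i | CyclicFace.IsBlackToWhite o i} * _ = _
  rw [hprod, mul_neg, Complex.neg_one_pow_mul_neg_I_pow (hcount.trans hhalf), pow_succ,
    mul_neg_one]
end

section
/- Let K be a field, let m and n be natural numbers, let A be an m×m matrix over K with det(1 - A) ≠ 0, let X be an n×m matrix over K, and let Y be an m×n matrix over K. Define the n×n matrix B := X * (1 - A)⁻¹ * Y. Then there exists a polynomial p ∈ K[T] with natural degree at most m such that p.eval 0 = det(1 - A) and, for every μ ∈ K, p.eval μ = det(1 - μ • B) * det(1 - A). -/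
/-!
Write `M = 1 - A`. By Sylvester's identity `det (1 - U V) = det (1 - V U)`, moving `Y` to the
front gives `det (1 - μ • B) = det (1 - μ • Y X M⁻¹)`, and multiplying by `det M` cancels the
inverse: `det (1 - μ • B) * det M = det (M - μ • Y X)`. The right-hand side is the determinant of
an `m × m` matrix whose entries are affine in `μ`, hence a polynomial of degree at most `m`.
-/

open Matrix Polynomial

namespace Matrix

variable {R m n : Type*} [CommRing R] [Fintype m] [DecidableEq m] [Fintype n] [DecidableEq n]

theorem det_one_sub_smul_mul_nonsing_inv_mul_mul_det (M : Matrix m m R) (hM : IsUnit M.det)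
    (X : Matrix n m R) (Y : Matrix m n R) (μ : R) :
    (1 - μ • (X * M⁻¹ * Y)).det * M.det = (M - μ • (Y * X)).det := by
  calc (1 - μ • (X * M⁻¹ * Y)).det * M.det
      = (1 - Y * (μ • X * M⁻¹)).det * M.det := by
        rw [← smul_mul, ← smul_mul, det_one_sub_mul_comm]
    _ = ((1 - Y * (μ • X * M⁻¹)) * M).det := (det_mul _ _).symm
    _ = (M - μ • (Y * X)).det := by
        rw [sub_mul, one_mul, Matrix.mul_assoc, Matrix.mul_assoc, nonsing_inv_mul _ hM,
          Matrix.mul_one, Matrix.mul_smul]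

end Matrix

namespace Polynomial

variable {R n : Type*} [CommRing R] [Fintype n] [DecidableEq n]

theorem eval_det_X_smul_add_C (A B : Matrix n n R) (r : R) :
    eval r (det ((X : R[X]) • A.map C + B.map C)) = det (r • A + B) := by
  rw [← coe_evalRingHom, RingHom.map_det]
  congr 1
  ext i j
  simp [mul_comm r]

end Polynomial

theorem boundary_path_matrix_char_poly_is_polynomial
    (K : Type*) [Field K] (m n : ℕ)
    (A : Matrix (Fin m) (Fin m) K)
    (hA : (1 - A).det ≠ 0)
    (X : Matrix (Fin n) (Fin m) K)
    (Y : Matrix (Fin m) (Fin n) K)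
    (B : Matrix (Fin n) (Fin n) K)
    (hB : B = X * (1 - A)⁻¹ * Y) :
    ∃ p : Polynomial K, p.natDegree ≤ m ∧ p.eval 0 = (1 - A).det ∧
      ∀ μ : K, p.eval μ = (1 - μ • B).det * (1 - A).det := by
  refine ⟨det ((Polynomial.X : K[X]) • (-(Y * X)).map C + (1 - A).map C), ?_, ?_, ?_⟩
  · simpa using natDegree_det_X_add_C_le (-(Y * X)) (1 - A)
  · rw [← coeff_zero_eq_eval_zero, coeff_det_X_add_C_zero]
  · intro μ
    rw [eval_det_X_smul_add_C, hB,
      det_one_sub_smul_mul_nonsing_inv_mul_mul_det _ hA.isUnit, smul_neg, neg_add_eq_sub]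
end
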